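/- arXiv:1704.07351 — 2 statements merged into one kernel-verified Lean document; each statement's English description precedes it below -/
import Mathlib

section
/- Let G be a finite connected undirected simple graph with n = |V(G)| ≥ 2 vertices and let r ∈ V(G) be a cut vertex whose removal splits G into connected components with vertex sets C_1, …, C_l (l ≥ 2). For each i let V_i := Σ_{j≠i} |C_j|. Suppose c > 0 is a real number such that V_i ≥ c·n for every i ∈ {1,…,l}. Then for every vertex v ∈ V(G), δ_{v•}(r) ≤ (1/c) · (Σ_{u∈V(G)} δ_{u•}(r)) / n; that is, the constant μ(r) satisfying δ_{v•}(r) ≤ μ(r)·\overline{δ(r)} for all v (where \overline{δ(r)} is the average of the dependency scores on r) can be taken equal to 1/c, independently of the size of G. -/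
open Finset

/-- Number of shortest paths between `s` and `t`: paths of length `dist s t`. -/
noncomputable def nsp {V : Type*} (G : SimpleGraph V) (s t : V) : ℕ :=
  Nat.card {p : G.Walk s t // p.IsPath ∧ p.length = G.dist s t}

/-- Number of shortest paths between `s` and `t` passing through `x`. -/
noncomputable def nspThrough {V : Type*} (G : SimpleGraph V) (s t x : V) : ℕ :=
  Nat.card {p : G.Walk s t // (p.IsPath ∧ p.length = G.dist s t) ∧ x ∈ p.support}

/-- Pair dependency δ_{st}(x) = σ_{st}(x)/σ_{st} (zero when x ∈ {s,t};
division by zero gives 0). -/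
noncomputable def pairDep {V : Type*} [DecidableEq V] (G : SimpleGraph V)
    (s t x : V) : ℝ :=
  if x = s ∨ x = t then 0 else (nspThrough G s t x : ℝ) / (nsp G s t : ℝ)

/-- Dependency score δ_{s•}(x) = Σ_{t ∉ {s,x}} δ_{st}(x); in particular δ_{x•}(x) = 0. -/
noncomputable def depScore {V : Type*} [Fintype V] [DecidableEq V]
    (G : SimpleGraph V) (s x : V) : ℝ :=
  ∑ t ∈ Finset.univ \ {s, x}, pairDep G s t x

/-- Betweenness centrality BC(x) = (1/(n(n-1))) Σ_{s ≠ x} δ_{s•}(x). -/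
noncomputable def bc {V : Type*} [Fintype V] [DecidableEq V]
    (G : SimpleGraph V) (x : V) : ℝ :=
  (1 / ((Fintype.card V : ℝ) * ((Fintype.card V : ℝ) - 1))) *
    ∑ s ∈ Finset.univ \ {x}, depScore G s x

/-- `C : Fin l → Finset V` is the family of vertex sets of the connected components
of `G − r`: each `C i` is nonempty, they are pairwise disjoint, they cover
`V(G) ∖ {r}`, and two vertices lie in the same `C i` iff they are joined by a walk
of `G` avoiding `r`. -/
def IsCompFamily {V : Type*} (G : SimpleGraph V) (r : V)
    {l : ℕ} (C : Fin l → Finset V) : Prop :=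
  (∀ i, (C i).Nonempty) ∧
  (∀ v : V, v ≠ r ↔ ∃ i, v ∈ C i) ∧
  (∀ i j, i ≠ j → Disjoint (C i) (C j)) ∧
  (∀ i, ∀ u ∈ C i, ∀ v : V, (v ∈ C i ↔ ∃ p : G.Walk u v, r ∉ p.support))

/-
A cut vertex `r` lies on every path between different components of `G - r`, so each
vertex `u ≠ r` has `δ_{u•}(r) ≥ V_i ≥ c n`, while every dependency score is at most `n - 1`
and `δ_{r•}(r) = 0`. Hence the sum of all dependency scores on `r` is at least
`(n - 1) c n`, i.e. `(1/c)` times the average is at least `n - 1 ≥ δ_{v•}(r)`.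
-/

open SimpleGraph

section ShortestPaths

variable {V : Type*} [DecidableEq V] (G : SimpleGraph V)

lemma pairDep_nonneg (s t x : V) : 0 ≤ pairDep G s t x := by
  unfold pairDep
  split_ifs
  · exact le_rfl
  · positivity

variable [Fintype V]

instance finite_shortestPaths (s t : V) :
    Finite {p : G.Walk s t // p.IsPath ∧ p.length = G.dist s t} := by
  classical
  infer_instance

lemma nsp_pos (hconn : G.Connected) (s t : V) : 0 < nsp G s t := by
  obtain ⟨p, hp⟩ := hconn.exists_path_of_dist s t
  exact Nat.card_pos_iff.mpr ⟨⟨⟨p, hp⟩⟩, inferInstance⟩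

lemma nspThrough_le_nsp (s t x : V) : nspThrough G s t x ≤ nsp G s t :=
  Nat.card_le_card_of_injective (fun p => ⟨p.1, p.2.1⟩)
    (fun _ _ h => Subtype.ext (Subtype.mk_eq_mk.mp h))

lemma pairDep_le_one (s t x : V) : pairDep G s t x ≤ 1 := by
  unfold pairDep
  split_ifs
  · exact zero_le_one
  · exact div_le_one_of_le₀ (by exact_mod_cast nspThrough_le_nsp G s t x) (Nat.cast_nonneg _)

lemma pairDep_eq_one_of_forall_mem_support (hconn : G.Connected) {s t x : V}
    (hs : x ≠ s) (ht : x ≠ t) (hall : ∀ p : G.Walk s t, x ∈ p.support) :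
    pairDep G s t x = 1 := by
  have hthrough : nspThrough G s t x = nsp G s t :=
    Nat.card_congr (Equiv.subtypeEquivRight fun p => ⟨And.left, fun h => ⟨h, hall p⟩⟩)
  rw [pairDep, if_neg (not_or.mpr ⟨hs, ht⟩), hthrough,
    div_self (Nat.cast_ne_zero.mpr (nsp_pos G hconn s t).ne')]

lemma depScore_self (x : V) : depScore G x x = 0 :=
  Finset.sum_eq_zero fun _ _ => if_pos (Or.inl rfl)

lemma depScore_le_card_sub_one (s x : V) : depScore G s x ≤ Fintype.card V - 1 := by
  have hcard : #(univ \ {s, x}) + 1 ≤ Fintype.card V := by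
    refine Finset.card_lt_card (Finset.ssubset_iff_of_subset (subset_univ _) |>.mpr ?_)
    exact ⟨s, mem_univ s, by simp⟩
  calc depScore G s x ≤ ∑ _t ∈ univ \ {s, x}, (1 : ℝ) :=
        Finset.sum_le_sum fun t _ => pairDep_le_one G s t x
    _ = #(univ \ {s, x}) := by simp
    _ ≤ Fintype.card V - 1 := by
        rw [le_sub_iff_add_le]
        exact_mod_cast hcard

lemma card_sub_one_mul_le_sum_depScore {x : V} {a : ℝ} (ha : ∀ u ≠ x, a ≤ depScore G u x) :
    (Fintype.card V - 1) * a ≤ ∑ u, depScore G u x := by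
  have hcard : (#(univ.erase x) : ℝ) = Fintype.card V - 1 := by
    rw [Finset.card_erase_of_mem (mem_univ x), Finset.card_univ,
      Nat.cast_pred (Fintype.card_pos_iff.mpr ⟨x⟩)]
  rw [← Finset.sum_erase (f := (depScore G · x)) univ (depScore_self G x), ← hcard,
    ← nsmul_eq_mul]
  exact Finset.card_nsmul_le_sum _ _ _ fun u hu => ha u (Finset.ne_of_mem_erase hu)

end ShortestPaths

section CutVertex

variable {V : Type*} {G : SimpleGraph V} {r : V} {l : ℕ} {C : Fin l → Finset V}

lemma IsCompFamily.ne_of_mem (hC : IsCompFamily G r C) {i : Fin l} {u : V} (hu : u ∈ C i) :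
    u ≠ r :=
  (hC.2.1 u).mpr ⟨i, hu⟩

variable [Fintype V] [DecidableEq V]

lemma IsCompFamily.pairDep_eq_one (hconn : G.Connected) (hC : IsCompFamily G r C)
    {i j : Fin l} (hij : j ≠ i) {u t : V} (hu : u ∈ C i) (ht : t ∈ C j) :
    pairDep G u t r = 1 := by
  have ht_notMem : t ∉ C i := Finset.disjoint_left.mp (hC.2.2.1 j i hij) ht
  refine pairDep_eq_one_of_forall_mem_support G hconn (hC.ne_of_mem hu).symm
    (hC.ne_of_mem ht).symm fun p => ?_
  by_contra hr
  exact ht_notMem ((hC.2.2.2 i u hu t).mpr ⟨p, hr⟩)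

lemma IsCompFamily.sum_card_le_depScore (hconn : G.Connected) (hC : IsCompFamily G r C)
    {i : Fin l} {u : V} (hu : u ∈ C i) :
    ∑ j ∈ univ \ {i}, ((C j).card : ℝ) ≤ depScore G u r := by
  set T := (univ \ {i}).biUnion C
  have hT : ∀ t ∈ T, ∃ j ≠ i, t ∈ C j := fun t ht => by
    obtain ⟨j, hj, htj⟩ := Finset.mem_biUnion.mp ht
    exact ⟨j, by simpa using hj, htj⟩
  have hTsub : T ⊆ univ \ {u, r} := fun t ht => by
    obtain ⟨j, hji, htj⟩ := hT t ht
    have htu : t ≠ u := fun h => Finset.disjoint_left.mp (hC.2.2.1 j i hji) htj (h ▸ hu)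
    simp [htu, hC.ne_of_mem htj]
  calc ∑ j ∈ univ \ {i}, ((C j).card : ℝ) = #T := by
        rw [Finset.card_biUnion fun a _ b _ hab => hC.2.2.1 a b hab]
        push_cast
        rfl
    _ = ∑ t ∈ T, pairDep G u t r := by
        rw [Finset.cast_card]
        refine Finset.sum_congr rfl fun t ht => ?_
        obtain ⟨j, hji, htj⟩ := hT t ht
        exact (hC.pairDep_eq_one hconn hji hu htj).symm
    _ ≤ depScore G u r :=
        Finset.sum_le_sum_of_subset_of_nonneg hTsub fun t _ _ => pairDep_nonneg G u t r

end CutVertex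

theorem stmt_0_general {V : Type*} [Fintype V] [DecidableEq V] (G : SimpleGraph V)
    (hconn : G.Connected)
    (r : V) {l : ℕ} (C : Fin l → Finset V)
    (hC : IsCompFamily G r C)
    (c : ℝ) (hc : 0 < c)
    (hV : ∀ i : Fin l,
      c * (Fintype.card V : ℝ) ≤ ∑ j ∈ Finset.univ \ {i}, ((C j).card : ℝ)) :
    ∀ v : V, depScore G v r ≤
      (1 / c) * ((∑ u : V, depScore G u r) / (Fintype.card V : ℝ)) := by
  intro v
  set n : ℝ := (Fintype.card V : ℝ)
  have hn : 0 < n := Nat.cast_pos.mpr (Fintype.card_pos_iff.mpr ⟨v⟩)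
  have hlower : ∀ u ≠ r, c * n ≤ depScore G u r := fun u hu => by
    obtain ⟨i, hui⟩ := (hC.2.1 u).mp hu
    exact (hV i).trans (hC.sum_card_le_depScore hconn hui)
  calc depScore G v r ≤ n - 1 := depScore_le_card_sub_one G v r
    _ = (n - 1) * (c * n) / (c * n) := by field_simp
    _ ≤ (∑ u, depScore G u r) / (c * n) := by
        gcongr
        exact card_sub_one_mul_le_sum_depScore G hlower
    _ = (1 / c) * ((∑ u, depScore G u r) / n) := by field_simp

/-- if every V_i = Σ_{j≠i} |C_j| is at least c·n, then every
dependency score on the cut vertex r is at most (1/c) times the average. -/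
theorem stmt_0 {V : Type*} [Fintype V] [DecidableEq V] (G : SimpleGraph V)
    (hconn : G.Connected) (hn : 2 ≤ Fintype.card V)
    (r : V) {l : ℕ} (hl : 2 ≤ l) (C : Fin l → Finset V)
    (hC : IsCompFamily G r C)
    (c : ℝ) (hc : 0 < c)
    (hV : ∀ i : Fin l,
      c * (Fintype.card V : ℝ) ≤ ∑ j ∈ Finset.univ \ {i}, ((C j).card : ℝ)) :
    ∀ v : V, depScore G v r ≤
      (1 / c) * ((∑ u : V, depScore G u r) / (Fintype.card V : ℝ)) :=
  stmt_0_general G hconn r C hC c hc hV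
end

section
/- Let G be a finite connected undirected simple graph and let r ∈ V(G) be a cut vertex whose removal splits G into connected components with vertex sets C_1, …, C_l (l ≥ 2). If s ∈ C_i and t ∈ C_j with i ≠ j, then the number of shortest paths between s and t factorizes as σ_{st} = σ_{sr} · σ_{rt}. -/
open Finset

/-
Every walk from `s` to `t` passes through the cut vertex `r`, so a shortest `s`–`t` path
splits at `r` into an `s`–`r` part and an `r`–`t` part. Both parts are shortest (otherwise
the triangle inequality would give a shorter `s`–`t` walk), hence
`dist s t = dist s r + dist r t`, and conversely concatenating a shortest `s`–`r` path with a
shortest `r`–`t` path gives a walk of length `dist s t`, which is then a shortest path.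
Splitting at `r` and concatenating are mutually inverse.
-/

namespace SimpleGraph

variable {V : Type*} {G : SimpleGraph V} {s r t : V}

theorem Walk.append_inj_of_length_eq {p p' : G.Walk s r} {q q' : G.Walk r t}
    (h : p.append q = p'.append q') (hl : p.length = p'.length) : p = p' ∧ q = q' := by
  have hsupp := congrArg Walk.support h
  rw [Walk.support_append, Walk.support_append] at hsupp
  obtain ⟨hp, hq⟩ := List.append_inj hsupp (by simp [hl])
  refine ⟨Walk.ext_support hp, Walk.ext_support ?_⟩
  rw [← q.cons_tail_support, ← q'.cons_tail_support, hq]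

theorem Walk.length_eq_dist_of_length_append_eq_dist (p : G.Walk s r) (q : G.Walk r t)
    (h : (p.append q).length = G.dist s t) :
    p.length = G.dist s r ∧ q.length = G.dist r t := by
  have htri : G.dist s t ≤ G.dist s r + G.dist r t := q.reachable.dist_triangle_right s
  have hp := dist_le p
  have hq := dist_le q
  rw [Walk.length_append] at h
  omega

theorem nsp_eq_zero_of_not_reachable (h : ¬G.Reachable s t) : nsp G s t = 0 :=
  have : IsEmpty (G.Walk s t) := not_nonempty_iff.mp h
  Nat.card_of_isEmpty

theorem dist_eq_add_of_forall_mem_support (hst : G.Reachable s t)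
    (h : ∀ p : G.Walk s t, r ∈ p.support) : G.dist s t = G.dist s r + G.dist r t := by
  classical
  obtain ⟨p, hp⟩ := hst.exists_walk_length_eq_dist
  rw [← p.take_spec (h p)] at hp
  obtain ⟨hpr, hrt⟩ := Walk.length_eq_dist_of_length_append_eq_dist _ _ hp
  rw [← hp, Walk.length_append, hpr, hrt]

def appendShortestPaths (hdist : G.dist s t = G.dist s r + G.dist r t)
    (pq : {p : G.Walk s r // p.IsPath ∧ p.length = G.dist s r} ×
      {q : G.Walk r t // q.IsPath ∧ q.length = G.dist r t}) :
    {p : G.Walk s t // p.IsPath ∧ p.length = G.dist s t} :=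
  have hlen : (pq.1.1.append pq.2.1).length = G.dist s t := by
    rw [Walk.length_append, pq.1.2.2, pq.2.2.2, hdist]
  ⟨pq.1.1.append pq.2.1, Walk.isPath_of_length_eq_dist _ hlen, hlen⟩

theorem appendShortestPaths_bijective (hdist : G.dist s t = G.dist s r + G.dist r t)
    (h : ∀ p : G.Walk s t, r ∈ p.support) : Function.Bijective (appendShortestPaths hdist) := by
  classical
  constructor
  · intro pq pq' happend
    obtain ⟨hp, hq⟩ := Walk.append_inj_of_length_eq (congrArg Subtype.val happend)
      (pq.1.2.2.trans pq'.1.2.2.symm)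
    exact Prod.ext (Subtype.ext hp) (Subtype.ext hq)
  · rintro ⟨p, hpath, hp⟩
    have hsplit := p.take_spec (h p)
    rw [← hsplit] at hp
    obtain ⟨hpr, hrt⟩ := Walk.length_eq_dist_of_length_append_eq_dist _ _ hp
    exact ⟨(⟨_, hpath.takeUntil _, hpr⟩, ⟨_, hpath.dropUntil _, hrt⟩), Subtype.ext hsplit⟩

theorem nsp_eq_mul_of_forall_mem_support (h : ∀ p : G.Walk s t, r ∈ p.support) :
    nsp G s t = nsp G s r * nsp G r t := by
  by_cases hst : G.Reachable s t
  · rw [nsp, nsp, nsp, ← Nat.card_prod]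
    exact (Nat.card_eq_of_bijective _
      (appendShortestPaths_bijective (dist_eq_add_of_forall_mem_support hst h) h)).symm
  · rw [nsp_eq_zero_of_not_reachable hst]
    by_cases hsr : G.Reachable s r
    · rw [nsp_eq_zero_of_not_reachable fun hrt => hst (hsr.trans hrt), mul_zero]
    · rw [nsp_eq_zero_of_not_reachable hsr, zero_mul]

end SimpleGraph

theorem stmt_5_general {V : Type*} (G : SimpleGraph V)
    (r : V) {l : ℕ} (C : Fin l → Finset V)
    (hC : IsCompFamily G r C)
    (i j : Fin l) (hij : i ≠ j) (s t : V) (hs : s ∈ C i) (ht : t ∈ C j) :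
    nsp G s t = nsp G s r * nsp G r t := by
  obtain ⟨-, -, hdisj, hcomp⟩ := hC
  refine SimpleGraph.nsp_eq_mul_of_forall_mem_support fun p => ?_
  by_contra hr
  have hti : t ∈ C i := (hcomp i s hs t).mpr ⟨p, hr⟩
  exact Finset.disjoint_left.mp (hdisj i j hij) hti ht

/-- for s, t in distinct components of G − r, the number of
shortest paths factorizes: σ_{st} = σ_{sr} · σ_{rt}. -/
theorem stmt_5 {V : Type*} [Fintype V] [DecidableEq V] (G : SimpleGraph V)
    (hconn : G.Connected)
    (r : V) {l : ℕ} (hl : 2 ≤ l) (C : Fin l → Finset V)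
    (hC : IsCompFamily G r C)
    (i j : Fin l) (hij : i ≠ j) (s t : V) (hs : s ∈ C i) (ht : t ∈ C j) :
    nsp G s t = nsp G s r * nsp G r t :=
  stmt_5_general G r C hC i j hij s t hs ht
end
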